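/- arXiv:0807.4327 — 5 statements merged into one kernel-verified Lean document; each statement's English description precedes it below -/
import Mathlib

section
/- Under (raBaDi-CoS), the Russell set ru := compr (fun x => ¬ mem x x) is not Normal. -/
theorem stmt1 {V : Type*} (mem : V → V → Prop) (Normal : V → Prop)
    (compr : (V → Prop) → V)
    (raBaDi : ∀ (A : V → Prop) (y : V), mem y (compr A) ↔ (A y ∨ ¬ Normal (compr A))) :
    ¬ Normal (compr (fun x => ¬ mem x x)) := by
  intro hNormal
  have hru := raBaDi (fun x => ¬ mem x x) (compr fun x => ¬ mem x x)
  simp only [hNormal, not_true_eq_false, or_false] at hru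
  exact iff_not_self hru
end

section
/- Under (raBaDi-CoS) together with the unrestricted extensionality axiom (EE), any two abnormal sets are equal; in particular the Russell set equals the universal set. -/
theorem mem_compr_of_not_normal {V : Type*} {mem : V → V → Prop} {Normal : V → Prop}
    {compr : (V → Prop) → V}
    (raBaDi : ∀ (A : V → Prop) (y : V), mem y (compr A) ↔ (A y ∨ ¬ Normal (compr A)))
    {A : V → Prop} (hA : ¬ Normal (compr A)) (y : V) : mem y (compr A) :=
  (raBaDi A y).2 (Or.inr hA)

theorem stmt2 {V : Type*} (mem : V → V → Prop) (Normal : V → Prop)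
    (compr : (V → Prop) → V)
    (raBaDi : ∀ (A : V → Prop) (y : V), mem y (compr A) ↔ (A y ∨ ¬ Normal (compr A)))
    (EE : ∀ x y : V, (∀ z, mem z x ↔ mem z y) → x = y)
    (A B : V → Prop) (hA : ¬ Normal (compr A)) (hB : ¬ Normal (compr B)) :
    compr A = compr B :=
  EE _ _ fun z =>
    iff_of_true (mem_compr_of_not_normal raBaDi hA z) (mem_compr_of_not_normal raBaDi hB z)
end

section
/- Under (raBaDi-CoS) and extensionality (EE), the universal set us := compr (fun _ => True) is not Normal. -/
/-! The Russell set `R = compr (fun y => ¬ mem y y)` cannot be normal, since then `mem y R ↔ ¬ mem y y`,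
which fails at `y = R`. An abnormal comprehension contains everything, and so does the universal set,
so by extensionality `R` is the universal set, which is therefore abnormal too. -/

section Comprehension

variable {V : Type*} (mem : V → V → Prop) (Normal : V → Prop) (compr : (V → Prop) → V)

def RaBaDiComprehension : Prop :=
  ∀ (A : V → Prop) (y : V), mem y (compr A) ↔ (A y ∨ ¬ Normal (compr A))

variable {mem Normal compr}

theorem RaBaDiComprehension.mem_iff_of_normal (h : RaBaDiComprehension mem Normal compr)
    {A : V → Prop} (hA : Normal (compr A)) (y : V) : mem y (compr A) ↔ A y := by
  simp [h A y, hA]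

theorem RaBaDiComprehension.mem_of_not_normal (h : RaBaDiComprehension mem Normal compr)
    {A : V → Prop} (hA : ¬ Normal (compr A)) (y : V) : mem y (compr A) :=
  (h A y).2 (Or.inr hA)

theorem RaBaDiComprehension.mem_compr_true (h : RaBaDiComprehension mem Normal compr) (y : V) :
    mem y (compr fun _ => True) :=
  (h _ y).2 (Or.inl trivial)

theorem RaBaDiComprehension.not_normal_russell (h : RaBaDiComprehension mem Normal compr) :
    ¬ Normal (compr fun y => ¬ mem y y) := fun hR =>
  not_iff_self (h.mem_iff_of_normal hR (compr fun y => ¬ mem y y)).symm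

end Comprehension

theorem stmt3 {V : Type*} (mem : V → V → Prop) (Normal : V → Prop)
    (compr : (V → Prop) → V)
    (raBaDi : ∀ (A : V → Prop) (y : V), mem y (compr A) ↔ (A y ∨ ¬ Normal (compr A)))
    (EE : ∀ x y : V, (∀ z, mem z x ↔ mem z y) → x = y) :
    ¬ Normal (compr (fun _ => True)) := by
  have h : RaBaDiComprehension mem Normal compr := raBaDi
  have russell_eq_univ : compr (fun y => ¬ mem y y) = compr fun _ => True :=
    EE _ _ fun z => iff_of_true (h.mem_of_not_normal h.not_normal_russell z) (h.mem_compr_true z)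
  rw [← russell_eq_univ]
  exact h.not_normal_russell
end

section
/- Under (raBaDi-CoS) with extensionality (EE), the eventuality axiom (nNEM) holds for sets of the form compr A: any two abnormal such sets are equipollent (there is a bijection between their element-classes). -/
theorem stmt15_general {V : Type*} (mem : V → V → Prop) (Normal : V → Prop)
    (compr : (V → Prop) → V)
    (raBaDi : ∀ (A : V → Prop) (y : V), mem y (compr A) ↔ (A y ∨ ¬ Normal (compr A)))
    (A B : V → Prop) (hA : ¬ Normal (compr A)) (hB : ¬ Normal (compr B)) :
    Nonempty ({z : V // mem z (compr A)} ≃ {z : V // mem z (compr B)}) :=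
  ⟨(Equiv.subtypeUnivEquiv (mem_compr_of_not_normal raBaDi hA)).trans
    (Equiv.subtypeUnivEquiv (mem_compr_of_not_normal raBaDi hB)).symm⟩

theorem stmt15 {V : Type*} (mem : V → V → Prop) (Normal : V → Prop)
    (compr : (V → Prop) → V)
    (raBaDi : ∀ (A : V → Prop) (y : V), mem y (compr A) ↔ (A y ∨ ¬ Normal (compr A)))
    (EE : ∀ x y : V, (∀ z, mem z x ↔ mem z y) → x = y)
    (A B : V → Prop) (hA : ¬ Normal (compr A)) (hB : ¬ Normal (compr B)) :
    Nonempty ({z : V // mem z (compr A)} ≃ {z : V // mem z (compr B)}) :=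
  stmt15_general mem Normal compr raBaDi A B hA hB
end

section
/- Under (noBE-CoS) with the Russell set satisfying ru ∈ ru, removing ru from itself is impossible: the set r' := compr (fun x => ¬ mem x x ∧ x ≠ ru) is extensionally equal to ru or is itself abnormal. -/
/- Russell's argument relativised to `s`: asking whether `r ∈ r` is contradictory unless `r = s`. -/
theorem eq_of_forall_mem_iff_not_mem_self_and_ne {V : Type*} {mem : V → V → Prop} {r s : V}
    (h : ∀ y, mem y r ↔ ¬ mem y y ∧ y ≠ s) : r = s := by
  by_contra hne
  have := h r
  tauto

theorem stmt18_general {V : Type*} (mem : V → V → Prop) (Normal : V → Prop)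
    (compr : (V → Prop) → V)
    (noBE : ∀ A : V → Prop, Normal (compr A) ↔ (∀ y, mem y (compr A) ↔ A y))
    (hab : ¬ Normal (compr (fun x => ¬ mem x x))) :
    ¬ Normal (compr (fun x => ¬ mem x x ∧ x ≠ compr (fun x => ¬ mem x x))) ∨
      (∀ y, mem y (compr (fun x => ¬ mem x x ∧ x ≠ compr (fun x => ¬ mem x x))) ↔
        mem y (compr (fun x => ¬ mem x x))) := by
  refine Or.inl fun hNormal => hab ?_
  rwa [← eq_of_forall_mem_iff_not_mem_self_and_ne ((noBE _).mp hNormal)]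

theorem stmt18 {V : Type*} (mem : V → V → Prop) (Normal : V → Prop)
    (compr : (V → Prop) → V)
    (noBE : ∀ A : V → Prop, Normal (compr A) ↔ (∀ y, mem y (compr A) ↔ A y))
    (hru : mem (compr (fun x => ¬ mem x x)) (compr (fun x => ¬ mem x x)))
    (hab : ¬ Normal (compr (fun x => ¬ mem x x))) :
    ¬ Normal (compr (fun x => ¬ mem x x ∧ x ≠ compr (fun x => ¬ mem x x))) ∨
      (∀ y, mem y (compr (fun x => ¬ mem x x ∧ x ≠ compr (fun x => ¬ mem x x))) ↔
        mem y (compr (fun x => ¬ mem x x))) :=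
  stmt18_general mem Normal compr noBE hab
end
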